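/- For any stabilizing constant κ > 0, any time step τ > 0, any initial grid function u_init, and every n ≥ 0, the GSAV-EI1 iterates satisfy sⁿ ≤ E_h(u_init), where E_h(v) := (ε²/2)‖∇_h v‖² + E_{1h}(v). -/

import Mathlib

open scoped BigOperators
noncomputable section

/-- Grid functions on the `M × M` periodic mesh, identified with vectors in `ℝ^{M²}`.
The sup norm of this Pi type is the discrete `L^∞` (maximum) norm. -/
abbrev GridFun (M : ℕ) : Type := Fin M × Fin M → ℝ

/-- Discrete inner product `⟨v,w⟩ = h² Σ_{i,j} v_{ij} w_{ij}`. -/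
def gridInner (M : ℕ) (h : ℝ) (v w : GridFun M) : ℝ :=
  h ^ 2 * ∑ p : Fin M × Fin M, v p * w p

/-- Discrete `L²` norm `‖v‖ = ⟨v,v⟩^{1/2}`. -/
def gridNorm (M : ℕ) (h : ℝ) (v : GridFun M) : ℝ :=
  Real.sqrt (gridInner M h v v)

/-- The discrete Laplacian as a linear map (periodic indexing via `Fin M` arithmetic). -/
def dLapL (M : ℕ) [NeZero M] (h : ℝ) : GridFun M →ₗ[ℝ] GridFun M where
  toFun v := fun p =>
    (v (p.1 + 1, p.2) + v (p.1 - 1, p.2) + v (p.1, p.2 + 1) + v (p.1, p.2 - 1) - 4 * v p) / h ^ 2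
  map_add' v w := by funext p; simp only [Pi.add_apply]; ring
  map_smul' c v := by funext p; simp only [Pi.smul_apply, smul_eq_mul, RingHom.id_apply]; ring

/-- The discrete Laplacian `Δ_h` as a continuous linear map on `ℝ^{M²}`. -/
def dLap (M : ℕ) [NeZero M] (h : ℝ) : GridFun M →L[ℝ] GridFun M :=
  LinearMap.toContinuousLinearMap (dLapL M h)

/-- Bulk energy `E_{1h}(v) = h² Σ F(v_{ij})`. -/
def E1h (M : ℕ) (h : ℝ) (F : ℝ → ℝ) (v : GridFun M) : ℝ :=
  h ^ 2 * ∑ p : Fin M × Fin M, F (v p)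

/-- Discrete gradient energy `(ε²/2) ‖∇_h v‖²`. -/
def gradE (M : ℕ) [NeZero M] (h ε : ℝ) (v : GridFun M) : ℝ :=
  ε ^ 2 / 2 * (h ^ 2 * ∑ p : Fin M × Fin M,
    (((v (p.1 + 1, p.2) - v p) / h) ^ 2 + ((v (p.1, p.2 + 1) - v p) / h) ^ 2))

/-- Modified energy `𝓔_h(v, r) = (ε²/2)‖∇_h v‖² + r`. -/
def modE (M : ℕ) [NeZero M] (h ε : ℝ) (v : GridFun M) (r : ℝ) : ℝ :=
  gradE M h ε v + r

/-- Discrete energy `E_h(v) = (ε²/2)‖∇_h v‖² + E_{1h}(v)`. -/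
def Eh (M : ℕ) [NeZero M] (h ε : ℝ) (F : ℝ → ℝ) (v : GridFun M) : ℝ :=
  gradE M h ε v + E1h M h F v

/-- `g(v, r) = σ(r) / σ(E_{1h}(v))`. -/
def gFun (M : ℕ) (h : ℝ) (F σ : ℝ → ℝ) (v : GridFun M) (r : ℝ) : ℝ :=
  σ r / σ (E1h M h F v)

/-- The linear operator `L_κ = κ g₀ I − ε² Δ_h`. -/
def Lkappa (M : ℕ) [NeZero M] (h ε κ g0 : ℝ) : GridFun M →L[ℝ] GridFun M :=
  (κ * g0) • (1 : GridFun M →L[ℝ] GridFun M) - ε ^ 2 • dLap M h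

/-- The nonlinear operator `N_κ(v, r) = g(v,r) f(v) + κ g₀ v` (with `f` applied entrywise). -/
def Nkappa (M : ℕ) (h κ g0 : ℝ) (f F σ : ℝ → ℝ) (v : GridFun M) (r : ℝ) : GridFun M :=
  fun p => gFun M h F σ v r * f (v p) + κ * g0 * v p

/-- One step of the GSAV-EI1 scheme. -/
def EI1step (M : ℕ) [NeZero M] (h ε κ τ : ℝ) (f F σ : ℝ → ℝ) (us : GridFun M × ℝ) :
    GridFun M × ℝ :=
  let g0 := gFun M h F σ us.1 us.2
  let Lk := Lkappa M h ε κ g0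
  let u1 := (NormedSpace.exp (-(τ • Lk))) us.1
    + (∫ θ in (0:ℝ)..τ, NormedSpace.exp (-((τ - θ) • Lk))) (Nkappa M h κ g0 f F σ us.1 us.2)
  (u1, us.2 - g0 * gridInner M h (fun p => f (us.1 p)) (u1 - us.1))

/-- The GSAV-EI1 iterates `(uⁿ, sⁿ)`. -/
def EI1 (M : ℕ) [NeZero M] (h ε κ τ : ℝ) (f F σ : ℝ → ℝ) (uinit : GridFun M) :
    ℕ → GridFun M × ℝ
  | 0 => (uinit, E1h M h F uinit)
  | n + 1 => EI1step M h ε κ τ f F σ (EI1 M h ε κ τ f F σ uinit n)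

/-- The midpoint values `(ũ^{n+1/2}, s̃^{n+1/2})` of the GSAV-EI2 scheme, as a function of
`(uⁿ, sⁿ)`; the prediction `(ũ^{n+1}, s̃^{n+1})` is a GSAV-EI1 step. -/
def EI2half (M : ℕ) [NeZero M] (h ε κ τ : ℝ) (f F σ : ℝ → ℝ) (us : GridFun M × ℝ) :
    GridFun M × ℝ :=
  let t := EI1step M h ε κ τ f F σ us
  ((1 / 2 : ℝ) • (us.1 + t.1), (us.2 + t.2) / 2)

/-- One step of the GSAV-EI2 scheme. -/
def EI2step (M : ℕ) [NeZero M] (h ε κ τ : ℝ) (f F σ : ℝ → ℝ) (us : GridFun M × ℝ) :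
    GridFun M × ℝ :=
  let t := EI1step M h ε κ τ f F σ us
  let m := EI2half M h ε κ τ f F σ us
  let gh := gFun M h F σ m.1 m.2
  let Lk := Lkappa M h ε κ gh
  let u1 := (NormedSpace.exp (-(τ • Lk))) us.1
    + (∫ θ in (0:ℝ)..τ, NormedSpace.exp (-((τ - θ) • Lk))) (Nkappa M h κ gh f F σ m.1 m.2)
  (u1, us.2 - gh * gridInner M h (fun p => f (m.1 p)) (u1 - us.1)
        + κ / 2 * gh * gridInner M h (u1 - t.1) (u1 - us.1))

/-- The GSAV-EI2 iterates `(uⁿ, sⁿ)`. -/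
def EI2 (M : ℕ) [NeZero M] (h ε κ τ : ℝ) (f F σ : ℝ → ℝ) (uinit : GridFun M) :
    ℕ → GridFun M × ℝ
  | 0 => (uinit, E1h M h F uinit)
  | n + 1 => EI2step M h ε κ τ f F σ (EI2 M h ε κ τ f F σ uinit n)

/-- One step of the stabilized generalized-SAV scheme (GSAV-EI1 with `e^{−τL}` replaced by
`(I + τL)^{−1}`). -/
def SAV1step (M : ℕ) [NeZero M] (h ε κ τ : ℝ) (f F σ : ℝ → ℝ) (us : GridFun M × ℝ) :
    GridFun M × ℝ :=
  let g0 := gFun M h F σ us.1 us.2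
  let Lk := Lkappa M h ε κ g0
  let u1 := (Ring.inverse ((1 : GridFun M →L[ℝ] GridFun M) + τ • Lk))
      (us.1 + τ • Nkappa M h κ g0 f F σ us.1 us.2)
  (u1, us.2 - g0 * gridInner M h (fun p => f (us.1 p)) (u1 - us.1))

/-- The stabilized generalized-SAV iterates `(uⁿ, sⁿ)`. -/
def SAV1 (M : ℕ) [NeZero M] (h ε κ τ : ℝ) (f F σ : ℝ → ℝ) (uinit : GridFun M) :
    ℕ → GridFun M × ℝ
  | 0 => (uinit, E1h M h F uinit)
  | n + 1 => SAV1step M h ε κ τ f F σ (SAV1 M h ε κ τ f F σ uinit n)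

/-!
Freeze `g = g(uⁿ, sⁿ)`: then `u^{n+1}` is the exact time-`τ` value of the solution of the linear
ODE `u' = N - L u` with `L = L_κⁿ`, `N = N_κⁿ(uⁿ, sⁿ)`, started at `uⁿ`. As `L` is self-adjoint
for `⟨·,·⟩`, the quadratic functional `½⟨L u, u⟩ - ⟨N, u⟩` has derivative `-‖u'‖²` along this
flow, so it does not increase. Expanding it with `L = κ g I - ε² Δ_h` and summation by parts
`⟨Δ_h v, w⟩ = -⟨∇_h v, ∇_h w⟩` yields
`(ε²/2)‖∇_h u^{n+1}‖² - (ε²/2)‖∇_h uⁿ‖² + (κ g / 2)‖u^{n+1} - uⁿ‖² ≤ g ⟨f(uⁿ), u^{n+1} - uⁿ⟩`,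
i.e. the modified energy `(ε²/2)‖∇_h uⁿ‖² + sⁿ` is non-increasing. It starts at `E_h(u_init)`
and dominates `sⁿ`.
-/

open NormedSpace ContinuousLinearMap

section ExpIntegrator

variable {E : Type*} [NormedAddCommGroup E] [NormedSpace ℝ E]

theorem antitone_energy_of_hasDerivAt (B : E →L[ℝ] E →L[ℝ] ℝ) (A : E →L[ℝ] E)
    (hB : ∀ x y, B x y = B y x) (hB₀ : ∀ x, 0 ≤ B x x)
    (hA : ∀ x y, B (A x) y = B x (A y)) (N : E) {U : ℝ → E}
    (hU : ∀ t, HasDerivAt U (N - A (U t)) t) :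
    Antitone fun t => B (A (U t)) (U t) / 2 - B N (U t) := by
  have hderiv : ∀ t, HasDerivAt (fun t => B (A (U t)) (U t) / 2 - B N (U t))
      (-B (N - A (U t)) (N - A (U t))) t := by
    intro t
    have hAU := A.hasFDerivAt.comp_hasDerivAt t (hU t)
    refine ((B.hasDerivAt_of_bilinear (fun _ => hAU) (fun _ => hU t)).div_const 2 |>.sub
      ((B N).hasFDerivAt.comp_hasDerivAt t (hU t))).congr_deriv ?_
    generalize hd : N - A (U t) = d
    have hAUt : A (U t) = N - d := by rw [← hd]; abel
    simp only [Function.comp_apply]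
    rw [hA d (U t), hB d, hAUt]
    simp only [map_sub, sub_apply]
    ring
  refine antitone_of_deriv_nonpos (fun t => (hderiv t).differentiableAt) fun t => ?_
  rw [(hderiv t).deriv, neg_nonpos]
  exact hB₀ _

theorem intervalIntegral_exp_neg_smul_sub (A : E →L[ℝ] E) (t : ℝ) :
    ∫ θ in (0:ℝ)..t, exp (-((t - θ) • A)) = ∫ s in (0:ℝ)..t, exp (-(s • A)) := by
  simpa using intervalIntegral.integral_comp_sub_left (fun s : ℝ => exp (-(s • A))) t
    (a := 0) (b := t)

/-- The first-order exponential integrator step `e^{-τA} u + (∫₀^τ e^{-(τ-θ)A} dθ) N`, i.e. the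
value at time `τ` of the solution of `u' = N - A u` starting from `u`. -/
def expIntegratorStep (A : E →L[ℝ] E) (τ : ℝ) (u N : E) : E :=
  exp (-(τ • A)) u + (∫ θ in (0:ℝ)..τ, exp (-((τ - θ) • A))) N

theorem expIntegratorStep_zero (A : E →L[ℝ] E) (u N : E) : expIntegratorStep A 0 u N = u := by
  simp [expIntegratorStep]

variable [CompleteSpace E]

theorem hasDerivAt_exp_neg_smul (A : E →L[ℝ] E) (t : ℝ) :
    HasDerivAt (fun s : ℝ => exp (-(s • A))) (-(A * exp (-(t • A)))) t := by
  simpa [smul_neg] using hasDerivAt_exp_smul_const' (𝕂 := ℝ) (-A) t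

theorem continuous_exp_neg_smul (A : E →L[ℝ] E) : Continuous fun s : ℝ => exp (-(s • A)) :=
  continuous_iff_continuousAt.2 fun t => (hasDerivAt_exp_neg_smul A t).continuousAt

theorem mul_intervalIntegral_exp_neg_smul (A : E →L[ℝ] E) (t : ℝ) :
    A * ∫ s in (0:ℝ)..t, exp (-(s • A)) = 1 - exp (-(t • A)) := by
  have hint := (continuous_exp_neg_smul A).intervalIntegrable (μ := MeasureTheory.volume) 0 t
  have hcomm := (ContinuousLinearMap.mul ℝ (E →L[ℝ] E) A).intervalIntegral_comp_comm hint
  simp only [ContinuousLinearMap.mul_apply'] at hcomm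
  rw [← hcomm]
  have hderiv : ∀ s ∈ Set.uIcc (0:ℝ) t,
      HasDerivAt (fun s : ℝ => -exp (-(s • A))) (A * exp (-(s • A))) s := fun s _ => by
    simpa using (hasDerivAt_exp_neg_smul A s).fun_neg
  rw [intervalIntegral.integral_eq_sub_of_hasDerivAt hderiv
    (((continuous_exp_neg_smul A).const_mul A).intervalIntegrable 0 t)]
  simp only [zero_smul, neg_zero, exp_zero]
  abel

theorem hasDerivAt_expIntegratorStep (A : E →L[ℝ] E) (u N : E) (t : ℝ) :
    HasDerivAt (fun t => expIntegratorStep A t u N) (N - A (expIntegratorStep A t u N)) t := by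
  simp only [expIntegratorStep, intervalIntegral_exp_neg_smul_sub]
  have hV : HasDerivAt (fun t : ℝ => ∫ s in (0:ℝ)..t, exp (-(s • A))) (exp (-(t • A))) t :=
    intervalIntegral.integral_hasDerivAt_right
      ((continuous_exp_neg_smul A).intervalIntegrable _ _)
      ((continuous_exp_neg_smul A).stronglyMeasurableAtFilter _ _)
      (continuous_exp_neg_smul A).continuousAt
  refine (((hasDerivAt_exp_neg_smul A t).clm_apply (hasDerivAt_const t u)).add
    (hV.clm_apply (hasDerivAt_const t N))).congr_deriv ?_
  have hAV := congrArg (fun T : E →L[ℝ] E => T N) (mul_intervalIntegral_exp_neg_smul A t)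
  simp only [mul_apply_eq_comp, sub_apply, one_apply_eq_self] at hAV
  simp only [neg_apply, mul_apply_eq_comp, map_add, map_zero, hAV]
  abel

theorem expIntegratorStep_energy_le (B : E →L[ℝ] E →L[ℝ] ℝ) (A : E →L[ℝ] E)
    (hB : ∀ x y, B x y = B y x) (hB₀ : ∀ x, 0 ≤ B x x)
    (hA : ∀ x y, B (A x) y = B x (A y)) (u N : E) {τ : ℝ} (hτ : 0 ≤ τ) :
    B (A (expIntegratorStep A τ u N)) (expIntegratorStep A τ u N) / 2
        - B N (expIntegratorStep A τ u N) ≤ B (A u) u / 2 - B N u := by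
  simpa only [expIntegratorStep_zero] using antitone_energy_of_hasDerivAt B A hB hB₀ hA N
    (hasDerivAt_expIntegratorStep A u N) hτ

end ExpIntegrator

theorem Equiv.Perm.sum_sub_mul_sub {ι : Type*} [Fintype ι] (e : Equiv.Perm ι) (v w : ι → ℝ) :
    ∑ i, (v (e i) - v i) * (w (e i) - w i) = -∑ i, (v (e i) + v (e.symm i) - 2 * v i) * w i := by
  have hdiag : ∑ i, v (e i) * w (e i) = ∑ i, v i * w i := Equiv.sum_comp e fun i => v i * w i
  have hoff : ∑ i, v i * w (e i) = ∑ i, v (e.symm i) * w i := by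
    simpa using Equiv.sum_comp e fun i => v (e.symm i) * w i
  simp only [sub_mul, mul_sub, add_mul, Finset.sum_sub_distrib, Finset.sum_add_distrib,
    mul_assoc, ← Finset.mul_sum]
  linarith

section Grid

variable {M : ℕ}

def gridInnerCLM (M : ℕ) (h : ℝ) : GridFun M →L[ℝ] GridFun M →L[ℝ] ℝ :=
  h ^ 2 • ∑ p : Fin M × Fin M, (ContinuousLinearMap.mul ℝ ℝ).bilinearComp (proj p) (proj p)

@[simp]
theorem gridInnerCLM_apply (h : ℝ) (v w : GridFun M) :
    gridInnerCLM M h v w = gridInner M h v w := by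
  simp [gridInnerCLM, gridInner]

theorem gridInner_comm (h : ℝ) (v w : GridFun M) : gridInner M h v w = gridInner M h w v := by
  simp only [gridInner, mul_comm (v _)]

theorem gridInner_self_nonneg (h : ℝ) (v : GridFun M) : 0 ≤ gridInner M h v v :=
  mul_nonneg (sq_nonneg h) (Finset.sum_nonneg fun p _ => mul_self_nonneg (v p))

variable [NeZero M]

/-- The bilinear form `⟨∇_h v, ∇_h w⟩`. -/
def gridGradInner (M : ℕ) [NeZero M] (h : ℝ) (v w : GridFun M) : ℝ :=
  h ^ 2 * ∑ p : Fin M × Fin M,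
    ((v (p.1 + 1, p.2) - v p) / h * ((w (p.1 + 1, p.2) - w p) / h)
      + (v (p.1, p.2 + 1) - v p) / h * ((w (p.1, p.2 + 1) - w p) / h))

theorem gridGradInner_comm (h : ℝ) (v w : GridFun M) :
    gridGradInner M h v w = gridGradInner M h w v := by
  simp only [gridGradInner, mul_comm ((v _ - v _) / h)]

theorem gradE_eq_gridGradInner (h ε : ℝ) (v : GridFun M) :
    gradE M h ε v = ε ^ 2 / 2 * gridGradInner M h v v := by
  simp only [gradE, gridGradInner, sq (_ / h)]

theorem gradE_nonneg (h ε : ℝ) (v : GridFun M) : 0 ≤ gradE M h ε v := by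
  unfold gradE
  positivity

theorem gridInner_dLap (h : ℝ) (v w : GridFun M) :
    gridInner M h (dLap M h v) w = -gridGradInner M h v w := by
  have hx : ∑ p : Fin M × Fin M, (v (p.1 + 1, p.2) - v p) * (w (p.1 + 1, p.2) - w p)
      = -∑ p : Fin M × Fin M, (v (p.1 + 1, p.2) + v (p.1 - 1, p.2) - 2 * v p) * w p :=
    Equiv.Perm.sum_sub_mul_sub ((Equiv.subRight (1 : Fin M)).symm.prodCongr (Equiv.refl _)) v w
  have hy : ∑ p : Fin M × Fin M, (v (p.1, p.2 + 1) - v p) * (w (p.1, p.2 + 1) - w p)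
      = -∑ p : Fin M × Fin M, (v (p.1, p.2 + 1) + v (p.1, p.2 - 1) - 2 * v p) * w p :=
    Equiv.Perm.sum_sub_mul_sub ((Equiv.refl _).prodCongr (Equiv.subRight (1 : Fin M)).symm) v w
  have hlhs : gridInner M h (dLap M h v) w = h ^ 2 * (h ^ 2)⁻¹ *
      (∑ p : Fin M × Fin M, (v (p.1 + 1, p.2) + v (p.1 - 1, p.2) - 2 * v p) * w p
        + ∑ p : Fin M × Fin M, (v (p.1, p.2 + 1) + v (p.1, p.2 - 1) - 2 * v p) * w p) := by
    rw [gridInner, ← Finset.sum_add_distrib, Finset.mul_sum, Finset.mul_sum]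
    refine Finset.sum_congr rfl fun p _ => ?_
    show h ^ 2 * ((_ / h ^ 2) * w p) = _
    ring
  have hrhs : gridGradInner M h v w = h ^ 2 * (h ^ 2)⁻¹ *
      (∑ p : Fin M × Fin M, (v (p.1 + 1, p.2) - v p) * (w (p.1 + 1, p.2) - w p)
        + ∑ p : Fin M × Fin M, (v (p.1, p.2 + 1) - v p) * (w (p.1, p.2 + 1) - w p)) := by
    rw [gridGradInner, ← Finset.sum_add_distrib, Finset.mul_sum, Finset.mul_sum]
    refine Finset.sum_congr rfl fun p _ => ?_
    ring
  rw [hlhs, hrhs, hx, hy]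
  ring

theorem gridInner_Lkappa (h ε κ g : ℝ) (v w : GridFun M) :
    gridInner M h (Lkappa M h ε κ g v) w
      = κ * g * gridInner M h v w + ε ^ 2 * gridGradInner M h v w := by
  simp only [← gridInnerCLM_apply, Lkappa, sub_apply, smul_apply, one_apply_eq_self, map_sub,
    map_smul, smul_eq_mul]
  simp only [gridInnerCLM_apply, gridInner_dLap]
  ring

theorem gridInner_Lkappa_comm (h ε κ g : ℝ) (v w : GridFun M) :
    gridInner M h (Lkappa M h ε κ g v) w = gridInner M h v (Lkappa M h ε κ g w) := by
  rw [gridInner_comm h v, gridInner_Lkappa, gridInner_Lkappa, gridInner_comm, gridGradInner_comm]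

end Grid

section Scheme

variable {M : ℕ} [NeZero M]

theorem modE_EI1step_le (h ε κ τ : ℝ) (f F σ : ℝ → ℝ) (hκ : 0 ≤ κ) (hτ : 0 ≤ τ)
    (hσ : ∀ x, 0 ≤ σ x) (us : GridFun M × ℝ) :
    modE M h ε (EI1step M h ε κ τ f F σ us).1 (EI1step M h ε κ τ f F σ us).2
      ≤ modE M h ε us.1 us.2 := by
  obtain ⟨u, s⟩ := us
  set g := gFun M h F σ u s
  set fu : GridFun M := fun p => f (u p)
  obtain ⟨u₁, hu₁⟩ : ∃ u₁,
      expIntegratorStep (Lkappa M h ε κ g) τ u (Nkappa M h κ g f F σ u s) = u₁ := ⟨_, rfl⟩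
  have hstep : EI1step M h ε κ τ f F σ (u, s) = (u₁, s - g * gridInner M h fu (u₁ - u)) := by
    rw [← hu₁]; rfl
  have hN : Nkappa M h κ g f F σ u s = g • fu + (κ * g) • u := rfl
  have henergy := expIntegratorStep_energy_le (gridInnerCLM M h) (Lkappa M h ε κ g)
    (fun v w => by simpa using gridInner_comm h v w)
    (fun v => by simpa using gridInner_self_nonneg h v)
    (fun v w => by simpa using gridInner_Lkappa_comm h ε κ g v w) u (Nkappa M h κ g f F σ u s) hτ
  rw [hu₁, hN] at henergy
  simp only [gridInnerCLM_apply, gridInner_Lkappa] at henergy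
  have hjump : 0 ≤ κ * g * gridInner M h (u₁ - u) (u₁ - u) :=
    mul_nonneg (mul_nonneg hκ (div_nonneg (hσ _) (hσ _))) (gridInner_self_nonneg h _)
  rw [hstep, modE, modE, gradE_eq_gridGradInner, gradE_eq_gridGradInner]
  simp only [← gridInnerCLM_apply, map_add, map_smul, map_sub, add_apply, smul_apply, sub_apply,
    smul_eq_mul] at henergy hjump ⊢
  simp only [gridInnerCLM_apply] at henergy hjump ⊢
  rw [gridInner_comm h u₁ u] at hjump
  -- the claim is `henergy + hjump / 2`
  linarith

end Scheme

theorem stmt_6_general (M : ℕ) [NeZero M] (h ε : ℝ)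
    (f F σ : ℝ → ℝ)
    (hσpos : ∀ x, 0 < σ x)
    (κ : ℝ) (hκ : 0 < κ)
    (τ : ℝ) (hτ : 0 < τ) (uinit : GridFun M) :
    ∀ n : ℕ, (EI1 M h ε κ τ f F σ uinit n).2 ≤ Eh M h ε F uinit := by
  have hmodE : ∀ n, modE M h ε (EI1 M h ε κ τ f F σ uinit n).1 (EI1 M h ε κ τ f F σ uinit n).2
      ≤ Eh M h ε F uinit := by
    intro n
    induction n with
    | zero => exact le_rfl
    | succ n ih =>
      exact (modE_EI1step_le h ε κ τ f F σ hκ.le hτ.le (fun x => (hσpos x).le) _).trans ih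
  intro n
  have := hmodE n
  rw [modE] at this
  linarith [gradE_nonneg h ε (EI1 M h ε κ τ f F σ uinit n).1]

/-- For any `κ > 0`, `τ > 0`, initial grid function, and `n ≥ 0`, the GSAV-EI1 iterates satisfy
`sⁿ ≤ E_h(u_init)`. -/
theorem stmt_6 (M : ℕ) [NeZero M] (L h ε : ℝ) (hL : 0 < L) (hh : h = L / M) (hε : 0 < ε)
    (f F σ : ℝ → ℝ) (hF : ∀ x, HasDerivAt F (-f x) x)
    (hσ : ContDiff ℝ 1 σ) (hσpos : ∀ x, 0 < σ x) (hσmono : ∀ x, 0 ≤ deriv σ x)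
    (κ : ℝ) (hκ : 0 < κ) (hf : ContDiff ℝ 1 f)
    (τ : ℝ) (hτ : 0 < τ) (uinit : GridFun M) :
    ∀ n : ℕ, (EI1 M h ε κ τ f F σ uinit n).2 ≤ Eh M h ε F uinit :=
  stmt_6_general M h ε f F σ hσpos κ hκ τ hτ uinit
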